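/- Let y ∈ {−1, +1}, let q_1, …, q_M ∈ {−1, +1}, and let q̄ ∈ {−1, +1} be the majority vote (with M odd so no ties). Then L_{0/1}(y, q̄) = (1/M)∑_i L_{0/1}(y, q_i) − y·q̄·(1/M)∑_i L_{0/1}(q̄, q_i), where L_{0/1}(a,b) = 1 if a ≠ b and 0 otherwise. -/
import Mathlib


open scoped Classical

/-- The 0-1 loss on the reals. -/
noncomputable def L01 (a b : ℝ) : ℝ := if b = a then 0 else 1

/-- Good-and-bad diversity decomposition (Brown & Kuncheva) for binary
majority-vote ensembles. -/
theorem good_bad_diversity_decomposition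
    (M : ℕ) (hModd : Odd M) (y : ℝ) (hy : y = 1 ∨ y = -1)
    (q : Fin M → ℝ) (hq : ∀ i, q i = 1 ∨ q i = -1)
    (qbar : ℝ) (hqbar : qbar = 1 ∨ qbar = -1)
    (hmaj : (M : ℝ) / 2 < (Finset.univ.filter fun i => q i = qbar).card) :
    L01 y qbar =
      (∑ i, L01 y (q i)) / M - y * qbar * ((∑ i, L01 qbar (q i)) / M) := by
  have hMpos : 0 < M := hModd.pos
  have hM : (M : ℝ) ≠ 0 := by positivity
  by_cases h : y = qbar
  · subst h
    have h0 : L01 y y = 0 := by simp [L01]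
    rw [h0]
    rcases hy with h1 | h1 <;> rw [h1] <;> ring
  · have hyq : y * qbar = -1 := by
      rcases hy with h1 | h1 <;> rcases hqbar with h2 | h2 <;>
        simp_all <;> ring
    have h1 : L01 y qbar = 1 := by
      have hne : qbar ≠ y := fun h' => h h'.symm
      simp [L01, hne]
    have key : ∀ i, L01 y (q i) + L01 qbar (q i) = 1 := by
      intro i
      rcases hq i with h2 | h2 <;> rcases hy with h3 | h3 <;>
        rcases hqbar with h4 | h4 <;> rw [L01, L01, h2, h3, h4] <;> norm_num <;> exact h (h3.trans h4.symm)
    have hsum : (∑ i, L01 y (q i)) + (∑ i, L01 qbar (q i)) = M := by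
      rw [← Finset.sum_add_distrib]
      simp [key]
    rw [h1, hyq]
    field_simp
    linarith
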